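/- For all a, b > 0 with a ≠ b, S(a,b) - H(a,b) ≤ (9/5)·(S(a,b) - L(a,b)), where S(a,b) = √((a²+b²)/2), H(a,b) = 2ab/(a+b), and L(a,b) = (b-a)/(ln b - ln a). -/

import Mathlib

/-!
Carlson's bound `L ≤ (A + 2G) / 3`, with `A` and `G` the arithmetic and geometric means,
follows after the substitution `b = a t²` from the Padé-type estimate
`log t ≥ 3 (t² - 1) / (t² + 4t + 1)` for `t ≥ 1`. It reduces the claim to
`3A + 6G ≤ 4S + 5H`; in terms of `s = a + b` and `g = G`, where `S² = (s² - 2g²) / 2`,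
squaring turns this into `(s - 2g)² (23s² + 20gs - 100g²) ≥ 0`, which holds because `2g ≤ s`.
-/

open Real

theorem log_ge_pade {t : ℝ} (ht : 1 ≤ t) : 3 * (t ^ 2 - 1) / (t ^ 2 + 4 * t + 1) ≤ log t := by
  set f : ℝ → ℝ := fun x => log x - 3 * (x ^ 2 - 1) / (x ^ 2 + 4 * x + 1)
  have hden : ∀ x : ℝ, 0 < x → 0 < x ^ 2 + 4 * x + 1 := fun x hx => by positivity
  have hf' : ∀ x : ℝ, 0 < x →
      HasDerivAt f ((x - 1) ^ 4 / (x * (x ^ 2 + 4 * x + 1) ^ 2)) x := by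
    intro x hx
    have hnum : HasDerivAt (fun x : ℝ => 3 * (x ^ 2 - 1)) (6 * x) x :=
      (((hasDerivAt_pow 2 x).sub_const 1).const_mul 3).congr_deriv (by ring)
    have hden' : HasDerivAt (fun x : ℝ => x ^ 2 + 4 * x + 1) (2 * x + 4) x :=
      (((hasDerivAt_pow 2 x).add ((hasDerivAt_id x).const_mul 4)).add_const 1).congr_deriv
        (by simp)
    exact ((hasDerivAt_log hx.ne').sub (hnum.div hden' (hden x hx).ne')).congr_deriv
      (by field_simp; ring)
  have hmono : MonotoneOn f (Set.Ici 1) := by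
    refine monotoneOn_of_deriv_nonneg (convex_Ici 1) ?_ ?_ ?_
    · exact fun x hx => (hf' x (by linarith [Set.mem_Ici.mp hx])).continuousAt.continuousWithinAt
    · rw [interior_Ici]
      exact fun x hx =>
        (hf' x (by linarith [Set.mem_Ioi.mp hx])).differentiableAt.differentiableWithinAt
    · rw [interior_Ici]
      intro x hx
      have hx0 : 0 < x := by linarith [Set.mem_Ioi.mp hx]
      rw [(hf' x hx0).deriv]
      positivity
  have hf1 : f 1 ≤ f t := hmono Set.self_mem_Ici (Set.mem_Ici.mpr ht) ht
  simpa [f, sub_nonneg] using hf1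

theorem six_mul_sub_div_le_log_sub_log {a b : ℝ} (ha : 0 < a) (hab : a ≤ b) :
    6 * (b - a) / (a + b + 4 * √(a * b)) ≤ log b - log a := by
  obtain ⟨t, ht, rfl⟩ : ∃ t, 1 ≤ t ∧ b = a * t ^ 2 :=
    ⟨√(b / a), one_le_sqrt.mpr ((one_le_div ha).mpr hab), by
      rw [sq_sqrt (div_pos (ha.trans_le hab) ha).le, mul_div_cancel₀ _ ha.ne']⟩
  have ht0 : 0 < t := by linarith
  have hsqrt : √(a * (a * t ^ 2)) = a * t := by
    rw [show a * (a * t ^ 2) = (a * t) ^ 2 by ring, sqrt_sq (by positivity)]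
  have hlog : log (a * t ^ 2) - log a = 2 * log t := by
    rw [log_mul ha.ne' (by positivity), log_pow]
    push_cast
    ring
  have hpade := log_ge_pade ht
  calc 6 * (a * t ^ 2 - a) / (a + a * t ^ 2 + 4 * √(a * (a * t ^ 2)))
      = 2 * (3 * (t ^ 2 - 1) / (t ^ 2 + 4 * t + 1)) := by
        rw [hsqrt]
        field_simp
        ring
    _ ≤ log (a * t ^ 2) - log a := by linarith

noncomputable def logMean (a b : ℝ) : ℝ := (b - a) / (log b - log a)

theorem logMean_comm (a b : ℝ) : logMean a b = logMean b a := by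
  rw [logMean, logMean, ← neg_sub b a, ← neg_sub (log b), neg_div_neg_eq]

theorem logMean_le_of_lt {a b : ℝ} (ha : 0 < a) (hab : a < b) :
    logMean a b ≤ ((a + b) / 2 + 2 * √(a * b)) / 3 := by
  have hb : 0 < b := ha.trans hab
  have hba : 0 < b - a := sub_pos.mpr hab
  have hlog := six_mul_sub_div_le_log_sub_log ha hab.le
  have hD : 0 < a + b + 4 * √(a * b) := by positivity
  calc logMean a b ≤ (b - a) / (6 * (b - a) / (a + b + 4 * √(a * b))) :=
        div_le_div_of_nonneg_left hba.le (div_pos (by linarith) hD) hlog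
    _ = ((a + b) / 2 + 2 * √(a * b)) / 3 := by
        field_simp
        ring

theorem logMean_le {a b : ℝ} (ha : 0 < a) (hb : 0 < b) (hab : a ≠ b) :
    logMean a b ≤ ((a + b) / 2 + 2 * √(a * b)) / 3 := by
  rcases hab.lt_or_gt with h | h
  · exact logMean_le_of_lt ha h
  · rw [logMean_comm, add_comm a, mul_comm a]
    exact logMean_le_of_lt hb h

theorem three_mul_arith_add_six_mul_geom_le {a b : ℝ} (ha : 0 < a) (hb : 0 < b) :
    3 * ((a + b) / 2) + 6 * √(a * b) ≤
      4 * √((a ^ 2 + b ^ 2) / 2) + 5 * (2 * a * b / (a + b)) := by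
  set s := a + b
  set g := √(a * b)
  set q := √((a ^ 2 + b ^ 2) / 2)
  have hs : 0 < s := by positivity
  have hg0 : 0 ≤ g := sqrt_nonneg _
  have hg : g ^ 2 = a * b := sq_sqrt (by positivity)
  have hq : q ^ 2 = (s ^ 2 - 2 * g ^ 2) / 2 := by
    rw [sq_sqrt (by positivity), hg]
    ring
  have hgs : 2 * g ≤ s := le_of_sq_le_sq (by nlinarith [sq_nonneg (a - b)]) hs.le
  have hkey : 3 * s ^ 2 / 2 + 6 * g * s - 10 * g ^ 2 ≤ 4 * q * s := by
    refine le_of_sq_le_sq ?_ (by positivity)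
    have hfactor : (4 * q * s) ^ 2 - (3 * s ^ 2 / 2 + 6 * g * s - 10 * g ^ 2) ^ 2 =
        (s - 2 * g) ^ 2 * (23 * s ^ 2 + 20 * g * s - 100 * g ^ 2) / 4 := by
      rw [mul_pow, mul_pow, hq]
      ring
    have hcofactor : 0 ≤ 23 * s ^ 2 + 20 * g * s - 100 * g ^ 2 := by nlinarith
    nlinarith [mul_nonneg (sq_nonneg (s - 2 * g)) hcofactor]
  have hH : 5 * (2 * a * b / s) = 10 * g ^ 2 / s := by
    rw [hg]
    ring
  rw [hH, ← sub_nonneg]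
  have hgap : 4 * q + 10 * g ^ 2 / s - (3 * (s / 2) + 6 * g) =
      (4 * q * s - (3 * s ^ 2 / 2 + 6 * g * s - 10 * g ^ 2)) / s := by
    field_simp
    ring
  rw [hgap]
  exact div_nonneg (sub_nonneg.mpr hkey) hs.le

theorem MSH_le_MSL (a b : ℝ) (ha : 0 < a) (hb : 0 < b) (hab : a ≠ b) :
    Real.sqrt ((a ^ 2 + b ^ 2) / 2) - 2 * a * b / (a + b) ≤
      (9 / 5) * (Real.sqrt ((a ^ 2 + b ^ 2) / 2) -
        (b - a) / (Real.log b - Real.log a)) := by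
  have hL : (b - a) / (log b - log a) ≤ ((a + b) / 2 + 2 * √(a * b)) / 3 := logMean_le ha hb hab
  have hM := three_mul_arith_add_six_mul_geom_le ha hb
  linarith
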